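/- Let C₋, C₊ be isotropic elasticity tensors on Sym₃ with Lamé parameters (λ₋, μ₋) and (λ₊, μ₊), μ∓ > 0 and 3λ∓ + 2μ∓ > 0, and ν∓ = λ∓/(2(λ∓+μ∓)). Suppose ⟦C⟧ = C₊ − C₋ is negative definite on Sym₃ (equivalently μ₊ < μ₋ and 3λ₊ + 2μ₊ < 3λ₋ + 2μ₋). Then for every unit vector n ∈ ℝ³: (i) the operator ⟦C⟧⁻¹ + K₋(n) on Sym₃ is invertible with inverse ⟦C⟧ − ⟦C⟧∘K₊(n)∘⟦C⟧; (ii) the quadratic form q ↦ q:((⟦C⟧⁻¹ + K₋(n)):q) is negative definite on Sym₃, since ⟦C⟧∘K₊(n)∘⟦C⟧ is positive semidefinite and hence ⟦C⟧ − ⟦C⟧∘K₊(n)∘⟦C⟧ ≤ ⟦C⟧ < 0. -/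

import Mathlib

open Matrix

noncomputable section

/-- 3×3 real matrices; symmetric ones model Sym₃. -/
abbrev Mat := Matrix (Fin 3) (Fin 3) ℝ

/-- Inner product on matrices: a:b = tr(ab). -/
def inn (a b : Mat) : ℝ := (a * b).trace

/-- Isotropic elasticity tensor with Lamé parameters l, m: ε ↦ l(tr ε)E + 2mε. -/
def isoC (l m : ℝ) (e : Mat) : Mat := (l * e.trace) • (1 : Mat) + (2*m) • e

/-- The interface operator K(n) for material parameters (μ, ν):
K(n):q = (1/(2μ))(qₙ⊗n + n⊗qₙ − (qₙₙ/(1−ν)) n⊗n). -/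
def Kop (μ ν : ℝ) (n : Fin 3 → ℝ) (q : Mat) : Mat :=
  (1/(2*μ)) • (vecMulVec (q.mulVec n) n + vecMulVec n (q.mulVec n)
    - ((n ⬝ᵥ q.mulVec n)/(1-ν)) • vecMulVec n n)

/-!
`K(n)` sees `q` only through the traction `q n`: `K(n) q = a ⊗ n + n ⊗ a` with
`a = (2Γ(n))⁻¹ (q n)`, where `Γ(n) = μ E + (λ + μ) n ⊗ n` is the acoustic tensor, while
`C (a ⊗ n + n ⊗ a) n = 2Γ(n) a`. The resolvent identity `A⁻¹ - B⁻¹ = A⁻¹ (B - A) B⁻¹` for the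
acoustic tensors of the two materials therefore gives `K₋ - K₊ = K₋ ⟦C⟧ K₊ = K₊ ⟦C⟧ K₋`, and with
these identities both products of `⟦C⟧⁻¹ + K₋` and `⟦C⟧ - ⟦C⟧ K₊ ⟦C⟧` expand to the identity.
Since `ν₊ ≤ 1/2`, Cauchy–Schwarz makes `K₊` positive semidefinite, so for
`r = (⟦C⟧⁻¹ + K₋) q ≠ 0` we get `q : (⟦C⟧⁻¹ + K₋) q = r : ⟦C⟧ r - ⟦C⟧ r : K₊ ⟦C⟧ r < 0`.
-/

def symOuter (a n : Fin 3 → ℝ) : Mat := vecMulVec a n + vecMulVec n a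

def acousticTensor (l μ : ℝ) (n : Fin 3 → ℝ) : Mat := μ • 1 + (l + μ) • vecMulVec n n

def Kmat (μ ν : ℝ) (n : Fin 3 → ℝ) : Mat :=
  (1 / (2 * μ)) • (1 - (1 / (2 * (1 - ν))) • vecMulVec n n)

lemma vecMulVec_mulVec' {ι κ R : Type*} [CommSemiring R] [Fintype κ] (a : ι → R) (b c : κ → R) :
    vecMulVec a b *ᵥ c = (b ⬝ᵥ c) • a := by
  rw [vecMulVec_mulVec, op_smul_eq_smul]

lemma sq_dotProduct_le {ι : Type*} [Fintype ι] (u v : ι → ℝ) :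
    (u ⬝ᵥ v) ^ 2 ≤ (u ⬝ᵥ u) * (v ⬝ᵥ v) := by
  simpa [dotProduct, sq] using Finset.sum_mul_sq_le_sq_mul_sq Finset.univ u v

lemma inn_comm (a b : Mat) : inn a b = inn b a := trace_mul_comm a b

lemma inn_sub_left (a b c : Mat) : inn (a - b) c = inn a c - inn b c := by
  simp only [inn, sub_mul, trace_sub]

lemma symOuter_isSymm (a n : Fin 3 → ℝ) : (symOuter a n).IsSymm := by
  simp [symOuter, IsSymm, add_comm]

lemma symOuter_add_left (a b n : Fin 3 → ℝ) :
    symOuter (a + b) n = symOuter a n + symOuter b n := by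
  simp only [symOuter, add_vecMulVec, vecMulVec_add]; abel

lemma symOuter_sub_left (a b n : Fin 3 → ℝ) :
    symOuter (a - b) n = symOuter a n - symOuter b n := by
  simp only [symOuter, sub_vecMulVec, vecMulVec_sub]; abel

lemma isoC_add (l μ : ℝ) (a b : Mat) : isoC l μ (a + b) = isoC l μ a + isoC l μ b := by
  simp only [isoC, trace_add]; match_scalars <;> ring

lemma isoC_zero (l μ : ℝ) : isoC l μ 0 = 0 := by simp [isoC]

lemma isoC_sub_isoC (l μ l' μ' : ℝ) (e : Mat) :
    isoC l μ e - isoC l' μ' e = isoC (l - l') (μ - μ') e := by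
  simp only [isoC]; match_scalars <;> ring

lemma isoC_isSymm (l μ : ℝ) {e : Mat} (he : e.IsSymm) : (isoC l μ e).IsSymm := by
  simp [isoC, IsSymm, he.eq]

lemma inn_isoC_comm (l μ : ℝ) (a b : Mat) : inn (isoC l μ a) b = inn a (isoC l μ b) := by
  simp only [inn, isoC, add_mul, mul_add, Matrix.smul_mul, Matrix.mul_smul, one_mul, mul_one,
    trace_add, trace_smul, smul_eq_mul]
  ring

lemma isoC_params_neg_of_negDef {l μ : ℝ}
    (h : ∀ q : Mat, q.IsSymm → q ≠ 0 → inn (isoC l μ q) q < 0) : μ < 0 ∧ 3 * l + 2 * μ < 0 := by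
  constructor
  · have hs : (!![(0 : ℝ), 1, 0; 1, 0, 0; 0, 0, 0]).IsSymm := by
      ext i j; fin_cases i <;> fin_cases j <;> rfl
    have h0 : (!![(0 : ℝ), 1, 0; 1, 0, 0; 0, 0, 0]) ≠ 0 := fun h0 => by
      simpa using congrFun (congrFun h0 0) 1
    have := h _ hs h0
    simp [inn, isoC, trace_fin_three] at this
    linarith
  · have := h 1 isSymm_one one_ne_zero
    simp [inn, isoC] at this
    linarith

lemma acousticTensor_sub (l μ l' μ' : ℝ) (n : Fin 3 → ℝ) :
    acousticTensor (l - l') (μ - μ') n = acousticTensor l μ n - acousticTensor l' μ' n := by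
  simp only [acousticTensor]; match_scalars <;> ring

lemma isoC_symOuter_mulVec (l μ : ℝ) {n : Fin 3 → ℝ} (hn : n ⬝ᵥ n = 1) (a : Fin 3 → ℝ) :
    isoC l μ (symOuter a n) *ᵥ n = (2 • acousticTensor l μ n) *ᵥ a := by
  simp only [isoC, symOuter, acousticTensor, add_mulVec, smul_mulVec, one_mulVec,
    vecMulVec_mulVec', hn, trace_add, trace_vecMulVec, dotProduct_comm a n]
  match_scalars <;> ring

lemma Kmat_mulVec (μ ν : ℝ) (n v : Fin 3 → ℝ) :
    Kmat μ ν n *ᵥ v = (1 / (2 * μ)) • (v - ((n ⬝ᵥ v) / (2 * (1 - ν))) • n) := by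
  simp only [Kmat, smul_mulVec, sub_mulVec, one_mulVec, vecMulVec_mulVec']
  match_scalars <;> ring

lemma Kop_eq_symOuter (μ ν : ℝ) (n : Fin 3 → ℝ) (q : Mat) :
    Kop μ ν n q = symOuter (Kmat μ ν n *ᵥ (q *ᵥ n)) n := by
  simp only [Kop, symOuter, Kmat_mulVec, smul_vecMulVec, vecMulVec_smul, sub_vecMulVec,
    vecMulVec_sub]
  rw [div_mul_eq_div_div _ 2 (1 - ν)]
  match_scalars <;> ring

lemma Kop_add (μ ν : ℝ) (n : Fin 3 → ℝ) (a b : Mat) :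
    Kop μ ν n (a + b) = Kop μ ν n a + Kop μ ν n b := by
  simp only [Kop_eq_symOuter, add_mulVec, mulVec_add, symOuter_add_left]

lemma Kop_sub (μ ν : ℝ) (n : Fin 3 → ℝ) (a b : Mat) :
    Kop μ ν n (a - b) = Kop μ ν n a - Kop μ ν n b := by
  simp only [Kop_eq_symOuter, sub_mulVec, mulVec_sub, symOuter_sub_left]

lemma Kop_zero (μ ν : ℝ) (n : Fin 3 → ℝ) : Kop μ ν n 0 = 0 := by
  simpa using Kop_sub μ ν n 0 0

lemma Kop_isSymm (μ ν : ℝ) (n : Fin 3 → ℝ) (q : Mat) : (Kop μ ν n q).IsSymm := by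
  rw [Kop_eq_symOuter]; exact symOuter_isSymm _ _

lemma Kmat_mul_acousticTensor {l μ ν : ℝ} (hν : ν = l / (2 * (l + μ))) (hμ : μ ≠ 0)
    (h₁ : l + μ ≠ 0) (h₂ : l + 2 * μ ≠ 0) {n : Fin 3 → ℝ} (hn : n ⬝ᵥ n = 1) :
    Kmat μ ν n * (2 • acousticTensor l μ n) = 1 := by
  have hnn : vecMulVec n n * vecMulVec n n = vecMulVec n n := by
    rw [vecMulVec_mul_vecMulVec, hn, one_smul]
  have hc : 1 / (2 * (1 - ν)) = (l + μ) / (l + 2 * μ) := by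
    have h1ν : 1 - ν = (l + 2 * μ) / (2 * (l + μ)) := by rw [hν]; field_simp; ring
    rw [h1ν]; field_simp
  simp only [Kmat, hc, acousticTensor, Matrix.smul_mul, Matrix.mul_smul, sub_mul, mul_add,
    mul_one, one_mul, hnn]
  match_scalars <;> field_simp; ring

lemma Kop_isoC_Kop {μa νa μb νb l μ : ℝ} {n : Fin 3 → ℝ} (hn : n ⬝ᵥ n = 1) (q : Mat) :
    Kop μa νa n (isoC l μ (Kop μb νb n q))
      = symOuter ((Kmat μa νa n * (2 • acousticTensor l μ n) * Kmat μb νb n) *ᵥ (q *ᵥ n)) n := by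
  rw [Kop_eq_symOuter μb, Kop_eq_symOuter μa, isoC_symOuter_mulVec l μ hn, mulVec_mulVec,
    mulVec_mulVec]

lemma inn_Kop_self (μ ν : ℝ) (n : Fin 3 → ℝ) {p : Mat} (hp : p.IsSymm) :
    inn (Kop μ ν n p) p
      = 1 / (2 * μ) * (2 * ((p *ᵥ n) ⬝ᵥ (p *ᵥ n)) - (n ⬝ᵥ (p *ᵥ n)) ^ 2 / (1 - ν)) := by
  have hvec : ∀ a, a ᵥ* p = p *ᵥ a := fun a => by rw [← vecMul_transpose, hp.eq]
  have hnv : n ⬝ᵥ (p *ᵥ (p *ᵥ n)) = (p *ᵥ n) ⬝ᵥ (p *ᵥ n) := by rw [dotProduct_mulVec, hvec]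
  simp only [inn, Kop, Matrix.smul_mul, sub_mul, add_mul, vecMulVec_mul, trace_smul, trace_sub,
    trace_add, trace_vecMulVec, smul_eq_mul, hvec, hnv]
  ring

lemma inn_Kop_self_nonneg {μ ν : ℝ} (hμ : 0 < μ) (hν : ν ≤ 1 / 2) {n : Fin 3 → ℝ}
    (hn : n ⬝ᵥ n = 1) {p : Mat} (hp : p.IsSymm) : 0 ≤ inn (Kop μ ν n p) p := by
  rw [inn_Kop_self μ ν n hp]
  set v := p *ᵥ n
  have hcs : (n ⬝ᵥ v) ^ 2 ≤ v ⬝ᵥ v := by simpa [hn] using sq_dotProduct_le n v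
  have hquot : (n ⬝ᵥ v) ^ 2 / (1 - ν) ≤ 2 * (v ⬝ᵥ v) := by
    rw [div_le_iff₀ (by linarith)]
    nlinarith [sq_nonneg (n ⬝ᵥ v)]
  have : 0 < 1 / (2 * μ) := by positivity
  nlinarith

lemma inn_isoC_Kop_isoC_nonneg (l μ : ℝ) {μ' ν : ℝ} (hμ' : 0 < μ') (hν : ν ≤ 1 / 2)
    {n : Fin 3 → ℝ} (hn : n ⬝ᵥ n = 1) {q : Mat} (hq : q.IsSymm) :
    0 ≤ inn (isoC l μ (Kop μ' ν n (isoC l μ q))) q := by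
  rw [inn_isoC_comm]
  exact inn_Kop_self_nonneg hμ' hν hn (isoC_isSymm l μ hq)

lemma poisson_le_half {l μ : ℝ} (hμ : 0 < μ) (hk : 0 < 3 * l + 2 * μ) :
    l / (2 * (l + μ)) ≤ 1 / 2 := by
  rw [div_le_iff₀ (by linarith)]; linarith

lemma Kmat_mul_acousticTensor_of_pos {l μ : ℝ} (hμ : 0 < μ) (hk : 0 < 3 * l + 2 * μ)
    {n : Fin 3 → ℝ} (hn : n ⬝ᵥ n = 1) :
    Kmat μ (l / (2 * (l + μ))) n * (2 • acousticTensor l μ n) = 1 :=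
  Kmat_mul_acousticTensor rfl hμ.ne' (by linarith) (by linarith) hn

section interface

variable {la μa νa lb μb νb : ℝ} {n : Fin 3 → ℝ} (hn : n ⬝ᵥ n = 1)
  (ha : Kmat μa νa n * (2 • acousticTensor la μa n) = 1)
  (hb : Kmat μb νb n * (2 • acousticTensor lb μb n) = 1)
include hn ha hb

local notation "⟦C⟧" => isoC (lb - la) (μb - μa)

lemma Kop_sub_Kop (q : Mat) :
    Kop μa νa n q - Kop μb νb n q = Kop μa νa n (⟦C⟧ (Kop μb νb n q)) := by
  rw [Kop_isoC_Kop hn, acousticTensor_sub, smul_sub, mul_sub, sub_mul, ha, one_mul, mul_assoc,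
    mul_eq_one_comm.mp hb, mul_one, sub_mulVec, symOuter_sub_left, Kop_eq_symOuter, Kop_eq_symOuter]

lemma Kop_sub_Kop' (q : Mat) :
    Kop μa νa n q - Kop μb νb n q = Kop μb νb n (⟦C⟧ (Kop μa νa n q)) := by
  rw [Kop_isoC_Kop hn, acousticTensor_sub, smul_sub, mul_sub, sub_mul, hb, one_mul, mul_assoc,
    mul_eq_one_comm.mp ha, mul_one, sub_mulVec, symOuter_sub_left, Kop_eq_symOuter, Kop_eq_symOuter]

lemma resolvent_left_inv (D : Mat →ₗ[ℝ] Mat)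
    (hD : ∀ q : Mat, q.IsSymm → D (⟦C⟧ q) = q) {q : Mat} (hq : q.IsSymm) :
    D (⟦C⟧ q - ⟦C⟧ (Kop μb νb n (⟦C⟧ q))) + Kop μa νa n (⟦C⟧ q - ⟦C⟧ (Kop μb νb n (⟦C⟧ q)))
      = q := by
  rw [map_sub, hD q hq, hD _ (Kop_isSymm ..), Kop_sub, ← Kop_sub_Kop hn ha hb]
  abel

lemma resolvent_right_inv (D : Mat →ₗ[ℝ] Mat)
    (hD : ∀ q : Mat, q.IsSymm → ⟦C⟧ (D q) = q) {q : Mat} (hq : q.IsSymm) :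
    ⟦C⟧ (D q + Kop μa νa n q) - ⟦C⟧ (Kop μb νb n (⟦C⟧ (D q + Kop μa νa n q))) = q := by
  rw [isoC_add, hD q hq, Kop_add, ← Kop_sub_Kop' hn ha hb, add_sub_cancel, add_sub_cancel_right]

lemma inn_add_Kop_self_neg (hμb : 0 < μb) (hνb : νb ≤ 1 / 2)
    (hneg : ∀ q : Mat, q.IsSymm → q ≠ 0 → inn (⟦C⟧ q) q < 0)
    (D : Mat →ₗ[ℝ] Mat) (hDs : ∀ q : Mat, q.IsSymm → (D q).IsSymm)
    (hD : ∀ q : Mat, q.IsSymm → ⟦C⟧ (D q) = q) {q : Mat} (hq : q.IsSymm)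
    (hq0 : q ≠ 0) : inn (D q + Kop μa νa n q) q < 0 := by
  have hrq := resolvent_right_inv hn ha hb D hD hq
  have hr : (D q + Kop μa νa n q).IsSymm := (hDs q hq).add (Kop_isSymm ..)
  generalize D q + Kop μa νa n q = r at hrq hr ⊢
  obtain rfl | hr0 := eq_or_ne r 0
  · rw [isoC_zero, Kop_zero, isoC_zero, sub_zero] at hrq
    exact absurd hrq.symm hq0
  rw [← hrq, inn_comm, inn_sub_left]
  linarith [hneg r hr hr0, inn_isoC_Kop_isoC_nonneg (lb - la) (μb - μa) hμb hνb hn hr]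

end interface

/-- if ⟦C⟧ = C₊ − C₋ is negative definite on Sym₃ (equivalently μ₊ < μ₋ and
3λ₊+2μ₊ < 3λ₋+2μ₋) then ⟦C⟧⁻¹ + K₋(n) is invertible with inverse ⟦C⟧ − ⟦C⟧∘K₊(n)∘⟦C⟧, the
operator ⟦C⟧∘K₊(n)∘⟦C⟧ is positive semidefinite, and the quadratic form of ⟦C⟧⁻¹ + K₋(n)
is negative definite on Sym₃. -/
theorem negdef_jump_inverse
    (lm μm lp μp : ℝ)
    (hμm : 0 < μm) (hkm : 0 < 3*lm + 2*μm) (hμp : 0 < μp) (hkp : 0 < 3*lp + 2*μp)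
    (νm νp : ℝ) (hνm : νm = lm/(2*(lm + μm))) (hνp : νp = lp/(2*(lp + μp)))
    (jump : Mat → Mat) (hjump : ∀ q : Mat, jump q = isoC lp μp q - isoC lm μm q)
    (hneg : ∀ q : Mat, q.IsSymm → q ≠ 0 → inn (jump q) q < 0)
    (D : Mat →ₗ[ℝ] Mat)
    (hDs : ∀ q : Mat, q.IsSymm → (D q).IsSymm)
    (hD₁ : ∀ q : Mat, q.IsSymm → D (jump q) = q)
    (hD₂ : ∀ q : Mat, q.IsSymm → jump (D q) = q)
    (n : Fin 3 → ℝ) (hn : n ⬝ᵥ n = 1) :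
    (μp < μm ∧ 3*lp + 2*μp < 3*lm + 2*μm)
    ∧ (∀ q : Mat, q.IsSymm →
        (D (jump q - jump (Kop μp νp n (jump q)))
            + Kop μm νm n (jump q - jump (Kop μp νp n (jump q))) = q)
        ∧ (jump (D q + Kop μm νm n q)
            - jump (Kop μp νp n (jump (D q + Kop μm νm n q))) = q))
    ∧ (∀ q : Mat, q.IsSymm → 0 ≤ inn (jump (Kop μp νp n (jump q))) q)
    ∧ (∀ q : Mat, q.IsSymm → q ≠ 0 → inn (D q + Kop μm νm n q) q < 0) := by
  obtain rfl : jump = isoC (lp - lm) (μp - μm) :=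
    funext fun q => (hjump q).trans (isoC_sub_isoC ..)
  subst hνm hνp
  have hm := Kmat_mul_acousticTensor_of_pos hμm hkm hn
  have hp := Kmat_mul_acousticTensor_of_pos hμp hkp hn
  have hνp := poisson_le_half hμp hkp
  refine ⟨?_, fun q hq => ⟨resolvent_left_inv hn hm hp D hD₁ hq,
      resolvent_right_inv hn hm hp D hD₂ hq⟩,
    fun q hq => inn_isoC_Kop_isoC_nonneg _ _ hμp hνp hn hq,
    fun q hq hq0 => inn_add_Kop_self_neg hn hm hp hμp hνp hneg D hDs hD₂ hq hq0⟩
  have := isoC_params_neg_of_negDef hneg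
  constructor <;> linarith
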